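/- Let K ⊂ ℝ^m be convex and compact, κ > 0, and let c : ℝ^m × ℝ^m → ℝ be continuous such that for every x ∈ K the map y ↦ c(x,y) is semiconcave with constant κ on K, i.e. (1−λ)c(x,y₁) + λc(x,y₂) − c(x,(1−λ)y₁+λy₂) ≤ κ·λ(1−λ)|y₁−y₂|² for all y₁, y₂ ∈ K and λ ∈ [0,1]. Define C(μ,ν) := inf_{γ∈Γ(μ,ν)} ∫ c(x,y) dγ. Then C(μ,·) is locally strongly semiconcave on 𝒫(K) with constant κ: for all μ, μ₂, μ₃ ∈ 𝒫(K), every γ ∈ Γ(μ₂,μ₃), and every λ ∈ [0,1], (1−λ)C(μ,μ₂) + λC(μ,μ₃) − C(μ, γ^λ_{1→2}) ≤ κ·λ(1−λ)·W²_{2,γ}(μ₂,μ₃). -/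

import Mathlib

open MeasureTheory Metric Set
open scoped RealInnerProductSpace ENNReal

noncomputable section

/-- `ℝ^m` with its Euclidean (inner product) structure. -/
abbrev Em (m : ℕ) := EuclideanSpace ℝ (Fin m)

namespace Paper

variable {m : ℕ}

/-- `γ ∈ Γ(μ,ν)`: `γ` is a transport plan (coupling) between `μ` and `ν`. -/
def IsCoupling (γ : Measure (Em m × Em m)) (μ ν : Measure (Em m)) : Prop :=
  γ.map Prod.fst = μ ∧ γ.map Prod.snd = ν

/-- The quadratic transport cost of a plan. -/
def cost2 (γ : Measure (Em m × Em m)) : ℝ :=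
  ∫ p, ‖p.1 - p.2‖ ^ 2 ∂γ

/-- `γ ∈ Γ₂(μ,ν)`: `γ` is a coupling attaining the infimum defining `W₂(μ,ν)`. -/
def IsOptCoupling (γ : Measure (Em m × Em m)) (μ ν : Measure (Em m)) : Prop :=
  IsCoupling γ μ ν ∧
    ∀ γ' : Measure (Em m × Em m), IsCoupling γ' μ ν → cost2 γ ≤ cost2 γ'

/-- The 2-Wasserstein distance. -/
def W2 (μ ν : Measure (Em m)) : ℝ :=
  Real.sqrt (sInf {r : ℝ |
    ∃ γ : Measure (Em m × Em m), IsCoupling γ μ ν ∧ r = cost2 γ})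

/-- The 1-Wasserstein distance. -/
def W1 (μ ν : Measure (Em m)) : ℝ :=
  sInf {r : ℝ |
    ∃ γ : Measure (Em m × Em m), IsCoupling γ μ ν ∧ r = ∫ p, ‖p.1 - p.2‖ ∂γ}

/-- The topological support of a measure on a metric space. -/
def msupport {X : Type*} [PseudoMetricSpace X] [MeasurableSpace X] (μ : Measure X) : Set X :=
  {x | ∀ r > (0 : ℝ), 0 < μ (ball x r)}

/-- The `R`-fattening `B_R(μ)` of the support of `μ`. -/
def fattening (μ : Measure (Em m)) (R : ℝ) : Set (Em m) :=
  ⋃ x ∈ msupport μ, ball x R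

/-- `μ ∈ 𝒫_c(ℝ^m)`: `μ` is concentrated on a compact set. -/
def IsCptSupp (μ : Measure (Em m)) : Prop :=
  ∃ K : Set (Em m), IsCompact K ∧ μ Kᶜ = 0

/-- `∫ ⟨α(x), y - x⟩ dγ`. -/
def pairing (α : Em m → Em m) (γ : Measure (Em m × Em m)) : ℝ :=
  ∫ p : Em m × Em m, (inner ℝ (α p.1) (p.2 - p.1) : ℝ) ∂γ

/-- `α ∈ ∂⁺U(μ)`, the localized Fréchet superdifferential of `U` at `μ`. -/
def InSuperDiff (U : Measure (Em m) → ℝ) (μ : Measure (Em m)) (α : Em m → Em m) : Prop :=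
  MemLp α 2 μ ∧
  ∀ R > (0 : ℝ), ∀ ε > (0 : ℝ), ∃ δ > (0 : ℝ), ∀ ν : Measure (Em m),
    IsProbabilityMeasure ν → ν (fattening μ R) = 1 → W2 μ ν ≤ δ →
      U ν - U μ ≤ sSup {r : ℝ | ∃ γ, IsOptCoupling γ μ ν ∧ r = pairing α γ} + ε * W2 μ ν

/-- `β ∈ ∂⁻U(μ)`, the localized Fréchet subdifferential of `U` at `μ`. -/
def InSubDiff (U : Measure (Em m) → ℝ) (μ : Measure (Em m)) (β : Em m → Em m) : Prop :=
  MemLp β 2 μ ∧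
  ∀ R > (0 : ℝ), ∀ ε > (0 : ℝ), ∃ δ > (0 : ℝ), ∀ ν : Measure (Em m),
    IsProbabilityMeasure ν → ν (fattening μ R) = 1 → W2 μ ν ≤ δ →
      sInf {r : ℝ | ∃ γ, IsOptCoupling γ μ ν ∧ r = pairing β γ} - ε * W2 μ ν ≤ U ν - U μ

/-- `p ∈ D⁺φ(x)`, the Fréchet superdifferential of `φ` at `x`. -/
def SuperDiffPt (φ : Em m → ℝ) (x p : Em m) : Prop :=
  ∀ ε > (0 : ℝ), ∃ δ > (0 : ℝ), ∀ y : Em m, ‖y - x‖ ≤ δ →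
    φ y - φ x - (inner ℝ p (y - x) : ℝ) ≤ ε * ‖y - x‖

/-- `φ` is locally semiconcave with linear modulus on `ℝ^m`. -/
def LocSemiconcave (φ : Em m → ℝ) : Prop :=
  ∀ R > (0 : ℝ), ∃ C ≥ (0 : ℝ), ∀ x ∈ ball (0 : Em m) R, ∀ y ∈ ball (0 : Em m) R,
    ∀ t ∈ Icc (0 : ℝ) 1,
      (1 - t) * φ x + t * φ y - φ ((1 - t) • x + t • y) ≤ C * t * (1 - t) * ‖x - y‖ ^ 2

/-- The potential energy functional induced by `φ`. -/
def potential (φ : Em m → ℝ) (μ : Measure (Em m)) : ℝ :=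
  ∫ x, φ x ∂μ

end Paper

open Paper

namespace Paper

/-- The transport cost functional `C(μ,ν) = inf_{γ ∈ Γ(μ,ν)} ∫ c dγ`. -/
def Ccost {m : ℕ} (c : Em m → Em m → ℝ) (μ ν : Measure (Em m)) : ℝ :=
  sInf {r : ℝ | ∃ γ : Measure (Em m × Em m), IsCoupling γ μ ν ∧
    r = ∫ p, c p.1 p.2 ∂γ}

end Paper


open ProbabilityTheory

instance bigBorel (m : ℕ) : BorelSpace ((Em m × Em m) × Em m × Em m) :=
  Prod.borelSpace

namespace Paper

variable {m : ℕ}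

lemma isProb_of_coupling {μ ν : Measure (Em m)} [IsProbabilityMeasure μ]
    {π : Measure (Em m × Em m)} (h : IsCoupling π μ ν) : IsProbabilityMeasure π := by
  have h1 : π Set.univ = μ Set.univ := by
    rw [← h.1, Measure.map_apply measurable_fst MeasurableSet.univ, Set.preimage_univ]
  constructor
  rw [h1, measure_univ]

lemma coupling_null_compl {K : Set (Em m)} (hKm : MeasurableSet K)
    {μ ν : Measure (Em m)} {π : Measure (Em m × Em m)} (h : IsCoupling π μ ν)
    (hμ : μ Kᶜ = 0) (hν : ν Kᶜ = 0) : π ((K ×ˢ K)ᶜ) = 0 := by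
  have h1 : π (Prod.fst ⁻¹' Kᶜ) = 0 := by
    rw [← Measure.map_apply measurable_fst hKm.compl, h.1]; exact hμ
  have h2 : π (Prod.snd ⁻¹' Kᶜ) = 0 := by
    rw [← Measure.map_apply measurable_snd hKm.compl, h.2]; exact hν
  refine measure_mono_null (fun p hp => ?_) (measure_union_null h1 h2)
  by_cases hc : p.1 ∈ K
  · exact Or.inr (fun hc2 => hp ⟨hc, hc2⟩)
  · exact Or.inl hc

end Paper

/-- part (3) of Theorem `thm:dyn-cost`: if `y ↦ c(x,y)` is semiconcave
on the convex compact set `K` with constant `κ`, uniformly for `x ∈ K`, then `C(μ,·)` is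
locally strongly semiconcave on `𝒫(K)` with constant `κ`: for all `μ, μ₂, μ₃ ∈ 𝒫(K)`,
every `γ ∈ Γ(μ₂,μ₃)` and `λ ∈ [0,1]`,
`(1−λ)C(μ,μ₂) + λC(μ,μ₃) − C(μ, γ^λ_{1→2}) ≤ κ·λ(1−λ)·W²_{2,γ}(μ₂,μ₃)`. -/


theorem statement10 {m : ℕ} (K : Set (Em m)) (hKconv : Convex ℝ K) (hK : IsCompact K)
    (κ : ℝ) (hκ : 0 < κ) (c : Em m → Em m → ℝ)
    (hcont : Continuous fun p : Em m × Em m => c p.1 p.2)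
    (hsc : ∀ x ∈ K, ∀ y₁ ∈ K, ∀ y₂ ∈ K, ∀ lam ∈ Icc (0 : ℝ) 1,
      (1 - lam) * c x y₁ + lam * c x y₂ - c x ((1 - lam) • y₁ + lam • y₂)
        ≤ κ * lam * (1 - lam) * ‖y₁ - y₂‖ ^ 2)
    (μ μ₂ μ₃ : Measure (Em m)) [IsProbabilityMeasure μ]
    [IsProbabilityMeasure μ₂] [IsProbabilityMeasure μ₃]
    (hμ : μ K = 1) (hμ₂ : μ₂ K = 1) (hμ₃ : μ₃ K = 1)
    (γ : Measure (Em m × Em m)) (hγ : IsCoupling γ μ₂ μ₃)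
    (lam : ℝ) (hlam : lam ∈ Icc (0 : ℝ) 1) :
    (1 - lam) * Ccost c μ μ₂ + lam * Ccost c μ μ₃ -
        Ccost c μ (γ.map fun p => (1 - lam) • p.1 + lam • p.2)
      ≤ κ * lam * (1 - lam) * ∫ p, ‖p.1 - p.2‖ ^ 2 ∂γ := by
  obtain ⟨hlam0, hlam1⟩ := hlam
  have hKm : MeasurableSet K := hK.isClosed.measurableSet
  -- a uniform bound for `c` on `K × K`
  obtain ⟨M0, hM0⟩ := (hK.prod hK).exists_bound_of_continuousOn hcont.continuousOn
  set M : ℝ := max M0 0 with hMdef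
  have hMnn : (0:ℝ) ≤ M := le_max_right _ _
  have hM : ∀ x ∈ K, ∀ y ∈ K, |c x y| ≤ M := fun x hx y hy =>
    le_trans (by simpa using hM0 (x, y) ⟨hx, hy⟩) (le_max_left _ _)
  -- null complements
  have hμc : μ Kᶜ = 0 := by
    rw [measure_compl hKm (measure_ne_top μ K), hμ, measure_univ, tsub_self]
  have hμ₂c : μ₂ Kᶜ = 0 := by
    rw [measure_compl hKm (measure_ne_top μ₂ K), hμ₂, measure_univ, tsub_self]
  have hμ₃c : μ₃ Kᶜ = 0 := by
    rw [measure_compl hKm (measure_ne_top μ₃ K), hμ₃, measure_univ, tsub_self]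
  -- the interpolation map
  set T : Em m × Em m → Em m := fun p => (1 - lam) • p.1 + lam • p.2 with hTdef
  have hTcont : Continuous T := by rw [hTdef]; fun_prop
  have hTmeas : Measurable T := hTcont.measurable
  have hTK : ∀ p : Em m × Em m, p ∈ K ×ˢ K → T p ∈ K := fun p hp =>
    hKconv hp.1 hp.2 (by linarith) hlam0 (by ring)
  haveI hγP : IsProbabilityMeasure γ := isProb_of_coupling hγ
  set ν : Measure (Em m) := γ.map T with hνdef
  haveI : IsProbabilityMeasure ν := Measure.isProbabilityMeasure_map hTmeas.aemeasurable
  have hγKK : γ ((K ×ˢ K)ᶜ) = 0 := coupling_null_compl hKm hγ hμ₂c hμ₃c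
  have hνc : ν Kᶜ = 0 := by
    rw [hνdef, Measure.map_apply hTmeas hKm.compl]
    exact measure_mono_null (fun p hp hpK => hp (hTK p hpK)) hγKK
  -- a.e. bound of `c` along couplings concentrated on `K × K`
  have hSae : ∀ (ν' : Measure (Em m)), ν' Kᶜ = 0 → ∀ (π : Measure (Em m × Em m)),
      IsCoupling π μ ν' → ∀ᵐ p ∂π, ‖c p.1 p.2‖ ≤ M := by
    intro ν' hν' π hπ
    have h0 : π ((K ×ˢ K)ᶜ) = 0 := coupling_null_compl hKm hπ hμc hν'
    rw [ae_iff]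
    refine measure_mono_null ?_ h0
    intro p hp
    simp only [Set.mem_setOf_eq, not_le] at hp
    intro hpK
    have := hM p.1 hpK.1 p.2 hpK.2
    rw [Real.norm_eq_abs] at hp
    linarith
  -- the defining sets of `Ccost` are bounded below
  have hbdd : ∀ (ν' : Measure (Em m)), ν' Kᶜ = 0 →
      BddBelow {r : ℝ | ∃ π, IsCoupling π μ ν' ∧ r = ∫ p, c p.1 p.2 ∂π} := by
    intro ν' hν'
    refine ⟨-M, fun r hr => ?_⟩
    obtain ⟨π, hπ, rfl⟩ := hr
    haveI := isProb_of_coupling hπ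
    have hb := norm_integral_le_of_norm_le_const (hSae ν' hν' π hπ)
    simp only [probReal_univ, mul_one] at hb
    have := (abs_le.mp (by rwa [Real.norm_eq_abs] at hb)).1
    linarith
  -- the defining sets of `Ccost` are nonempty
  have hne : {r : ℝ | ∃ π, IsCoupling π μ ν ∧ r = ∫ p, c p.1 p.2 ∂π}.Nonempty :=
    ⟨_, ⟨μ.prod ν, ⟨Measure.fst_prod, Measure.snd_prod⟩, rfl⟩⟩
  -- bound on the norms of points of `K`
  obtain ⟨R0, hR0⟩ := hK.isBounded.subset_closedBall 0
  set R : ℝ := max R0 0 with hRdef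
  have hRK : K ⊆ Metric.closedBall 0 R :=
    hR0.trans (Metric.closedBall_subset_closedBall (le_max_left _ _))
  have hnormK : ∀ y ∈ K, ‖y‖ ≤ R := fun y hy => by simpa using hRK hy
  -- main estimate, up to ε
  refine le_of_forall_pos_le_add fun ε hε => ?_
  obtain ⟨r, hrmem, hrlt⟩ := Real.lt_sInf_add_pos hne hε
  obtain ⟨π, hπ, rfl⟩ := hrmem
  have hrlt' : ∫ p, c p.1 p.2 ∂π < Ccost c μ ν + ε := hrlt
  haveI hπP : IsProbabilityMeasure π := isProb_of_coupling hπ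
  -- gluing construction
  set γ' : Measure (Em m × (Em m × Em m)) := γ.map (fun p => (T p, p)) with hγ'def
  have hpairmeas : Measurable (fun p : Em m × Em m => (T p, p)) :=
    hTmeas.prodMk measurable_id
  haveI : IsProbabilityMeasure γ' := Measure.isProbabilityMeasure_map hpairmeas.aemeasurable
  have hγ'fst : γ'.fst = ν := by
    rw [hγ'def, hνdef, Measure.fst, Measure.map_map measurable_fst hpairmeas]
    rfl
  set κc := γ'.condKernel with hκcdef
  have hdis : ν ⊗ₘ κc = γ' := by rw [← hγ'fst, hκcdef]; exact γ'.disintegrate _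
  set Θ : Measure ((Em m × Em m) × (Em m × Em m)) :=
    π ⊗ₘ (κc.comap Prod.snd measurable_snd) with hΘdef
  haveI : IsProbabilityMeasure Θ := by rw [hΘdef]; infer_instance
  have hΘfst : Θ.map Prod.fst = π := by rw [hΘdef]; exact Measure.fst_compProd π _
  -- second marginal of Θ is γ
  have hΘsnd : Θ.map Prod.snd = γ := by
    ext s hs
    have h1 : Θ.map Prod.snd s = ∫⁻ a, κc a.2 s ∂π := by
      rw [Measure.map_apply measurable_snd hs, hΘdef,
        Measure.compProd_apply (measurable_snd hs)]
      refine lintegral_congr fun a => ?_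
      rw [Kernel.comap_apply]
      congr 1
    have h2 : ∫⁻ a, κc a.2 s ∂π = ∫⁻ z, κc z s ∂ν := by
      rw [← hπ.2]
      exact (lintegral_map (Kernel.measurable_coe κc hs) measurable_snd).symm
    have h3 : ∫⁻ z, κc z s ∂ν = γ' (Prod.snd ⁻¹' s) := by
      rw [← hdis, Measure.compProd_apply (measurable_snd hs)]
      exact lintegral_congr fun z => rfl
    have h4 : γ' (Prod.snd ⁻¹' s) = γ s := by
      rw [hγ'def, Measure.map_apply hpairmeas (measurable_snd hs)]
      congr 1
    rw [h1, h2, h3, h4]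
  -- Θ-a.e., the middle point is the interpolation
  have haeT : ∀ᵐ q ∂Θ, T q.2 = q.1.2 := by
    rw [ae_iff]
    have hEmeas : MeasurableSet {q : Em m × (Em m × Em m) | ¬ T q.2 = q.1} :=
      (measurableSet_eq_fun (hTmeas.comp measurable_snd) measurable_fst).compl
    have hDmeas : MeasurableSet {q : (Em m × Em m) × (Em m × Em m) | ¬ T q.2 = q.1.2} :=
      (measurableSet_eq_fun (hTmeas.comp measurable_snd) measurable_fst.snd).compl
    have h1 : Θ {q | ¬ T q.2 = q.1.2}
        = ∫⁻ a, κc a.2 (Prod.mk a.2 ⁻¹' {q : Em m × (Em m × Em m) | ¬ T q.2 = q.1}) ∂π := by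
      rw [hΘdef, Measure.compProd_apply hDmeas]
      refine lintegral_congr fun a => ?_
      rw [Kernel.comap_apply]
      congr 1
    have h2 : ∫⁻ a, κc a.2 (Prod.mk a.2 ⁻¹' {q : Em m × (Em m × Em m) | ¬ T q.2 = q.1}) ∂π
        = ∫⁻ z, κc z (Prod.mk z ⁻¹' {q : Em m × (Em m × Em m) | ¬ T q.2 = q.1}) ∂ν := by
      rw [← hπ.2]
      exact (lintegral_map (Kernel.measurable_kernel_prodMk_left hEmeas)
        measurable_snd).symm
    have h3 : ∫⁻ z, κc z (Prod.mk z ⁻¹' {q : Em m × (Em m × Em m) | ¬ T q.2 = q.1}) ∂ν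
        = γ' {q : Em m × (Em m × Em m) | ¬ T q.2 = q.1} := by
      rw [← hdis, Measure.compProd_apply hEmeas]
    have h4 : γ' {q : Em m × (Em m × Em m) | ¬ T q.2 = q.1} = 0 := by
      rw [hγ'def, Measure.map_apply hpairmeas hEmeas]
      have he : (fun p : Em m × Em m => (T p, p)) ⁻¹'
          {q : Em m × (Em m × Em m) | ¬ T q.2 = q.1} = ∅ := by
        ext p; simp
      rw [he]; exact measure_empty
    rw [h1, h2, h3, h4]
  -- Θ-a.e. membership facts
  have hΘfst_null : Θ ((Prod.fst : (Em m × Em m) × (Em m × Em m) → Em m × Em m)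
      ⁻¹' (K ×ˢ K)ᶜ) = 0 := by
    rw [← Measure.map_apply measurable_fst (hKm.prod hKm).compl, hΘfst]
    exact coupling_null_compl hKm hπ hμc hνc
  have hΘsnd_null : Θ ((Prod.snd : (Em m × Em m) × (Em m × Em m) → Em m × Em m)
      ⁻¹' (K ×ˢ K)ᶜ) = 0 := by
    rw [← Measure.map_apply measurable_snd (hKm.prod hKm).compl, hΘsnd]
    exact hγKK
  have haeK1 : ∀ᵐ q ∂Θ, q.1.1 ∈ K ∧ q.1.2 ∈ K := by
    rw [ae_iff]
    refine measure_mono_null ?_ hΘfst_null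
    intro q hq
    simp only [Set.mem_setOf_eq] at hq
    simp only [Set.mem_preimage, Set.mem_compl_iff, Set.mem_prod]
    exact fun h => hq h
  have haeK2 : ∀ᵐ q ∂Θ, q.2.1 ∈ K ∧ q.2.2 ∈ K := by
    rw [ae_iff]
    refine measure_mono_null ?_ hΘsnd_null
    intro q hq
    simp only [Set.mem_setOf_eq] at hq
    simp only [Set.mem_preimage, Set.mem_compl_iff, Set.mem_prod]
    exact fun h => hq h
  -- integrability facts
  have hint2 : Integrable (fun q : (Em m × Em m) × (Em m × Em m) => c q.1.1 q.2.1) Θ := by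
    refine Integrable.mono' (integrable_const M)
      ((hcont.comp (continuous_fst.fst.prodMk continuous_snd.fst)).aestronglyMeasurable) ?_
    filter_upwards [haeK1, haeK2] with q h1 h2
    simpa using hM _ h1.1 _ h2.1
  have hint3 : Integrable (fun q : (Em m × Em m) × (Em m × Em m) => c q.1.1 q.2.2) Θ := by
    refine Integrable.mono' (integrable_const M)
      ((hcont.comp (continuous_fst.fst.prodMk continuous_snd.snd)).aestronglyMeasurable) ?_
    filter_upwards [haeK1, haeK2] with q h1 h2
    simpa using hM _ h1.1 _ h2.2
  have hintf : Integrable (fun q : (Em m × Em m) × (Em m × Em m) => c q.1.1 q.1.2) Θ := by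
    refine Integrable.mono' (integrable_const M)
      ((hcont.comp (continuous_fst.fst.prodMk continuous_fst.snd)).aestronglyMeasurable) ?_
    filter_upwards [haeK1] with q h1
    simpa using hM _ h1.1 _ h1.2
  have hintg : Integrable (fun q : (Em m × Em m) × (Em m × Em m) => ‖q.2.1 - q.2.2‖ ^ 2) Θ := by
    refine Integrable.mono' (integrable_const ((2 * R) ^ 2))
      (((continuous_snd.fst.sub continuous_snd.snd).norm.pow 2).aestronglyMeasurable) ?_
    filter_upwards [haeK2] with q h2
    have h21 := hnormK _ h2.1
    have h22 := hnormK _ h2.2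
    have hnb : ‖q.2.1 - q.2.2‖ ≤ 2 * R :=
      le_trans (norm_sub_le _ _) (by linarith)
    calc ‖‖q.2.1 - q.2.2‖ ^ 2‖ = ‖q.2.1 - q.2.2‖ ^ 2 := by
          rw [Real.norm_eq_abs, abs_of_nonneg (by positivity)]
      _ ≤ (2 * R) ^ 2 := pow_le_pow_left₀ (norm_nonneg _) hnb 2
  -- a.e. pointwise semiconcavity inequality
  have haeineq : ∀ᵐ q ∂Θ, (1 - lam) * c q.1.1 q.2.1 + lam * c q.1.1 q.2.2 - c q.1.1 q.1.2
      ≤ κ * lam * (1 - lam) * ‖q.2.1 - q.2.2‖ ^ 2 := by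
    filter_upwards [haeT, haeK1, haeK2] with q h0 h1 h2
    have hq := hsc q.1.1 h1.1 q.2.1 h2.1 q.2.2 h2.2 lam ⟨hlam0, hlam1⟩
    rw [← h0]
    exact hq
  -- integrated inequality
  have hintsum : Integrable
      (fun q : (Em m × Em m) × (Em m × Em m) =>
        (1 - lam) * c q.1.1 q.2.1 + lam * c q.1.1 q.2.2) Θ :=
    (hint2.const_mul _).add (hint3.const_mul _)
  have hintlhs : Integrable
      (fun q : (Em m × Em m) × (Em m × Em m) =>
        (1 - lam) * c q.1.1 q.2.1 + lam * c q.1.1 q.2.2 - c q.1.1 q.1.2) Θ :=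
    hintsum.sub hintf
  have keyL : ∫ q, ((1 - lam) * c q.1.1 q.2.1 + lam * c q.1.1 q.2.2 - c q.1.1 q.1.2) ∂Θ
      ≤ ∫ q, κ * lam * (1 - lam) * ‖q.2.1 - q.2.2‖ ^ 2 ∂Θ :=
    integral_mono_ae hintlhs (hintg.const_mul _) haeineq
  have e1 : ∫ q, ((1 - lam) * c q.1.1 q.2.1 + lam * c q.1.1 q.2.2 - c q.1.1 q.1.2) ∂Θ
      = (1 - lam) * (∫ q, c q.1.1 q.2.1 ∂Θ) + lam * (∫ q, c q.1.1 q.2.2 ∂Θ)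
        - ∫ q, c q.1.1 q.1.2 ∂Θ := by
    rw [integral_sub hintsum hintf, integral_add (hint2.const_mul _) (hint3.const_mul _),
      integral_const_mul, integral_const_mul]
  have e2 : ∫ q, (κ * lam * (1 - lam) * ‖q.2.1 - q.2.2‖ ^ 2) ∂Θ
      = κ * lam * (1 - lam) * ∫ q, ‖q.2.1 - q.2.2‖ ^ 2 ∂Θ := integral_const_mul _ _
  have key : (1 - lam) * (∫ q, c q.1.1 q.2.1 ∂Θ) + lam * (∫ q, c q.1.1 q.2.2 ∂Θ)
      - ∫ q, c q.1.1 q.1.2 ∂Θ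
      ≤ κ * lam * (1 - lam) * ∫ q, ‖q.2.1 - q.2.2‖ ^ 2 ∂Θ := by
    rw [← e1, ← e2]; exact keyL
  -- the two projected couplings
  have hmap2 : Measurable (fun q : (Em m × Em m) × (Em m × Em m) => (q.1.1, q.2.1)) :=
    measurable_fst.fst.prodMk measurable_snd.fst
  have hmap3 : Measurable (fun q : (Em m × Em m) × (Em m × Em m) => (q.1.1, q.2.2)) :=
    measurable_fst.fst.prodMk measurable_snd.snd
  set γ₂ := Θ.map (fun q => (q.1.1, q.2.1)) with hγ₂def
  set γ₃ := Θ.map (fun q => (q.1.1, q.2.2)) with hγ₃def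
  have hγ₂c : IsCoupling γ₂ μ μ₂ := by
    constructor
    · rw [hγ₂def, Measure.map_map measurable_fst hmap2]
      have he : (Prod.fst ∘ fun q : (Em m × Em m) × (Em m × Em m) => (q.1.1, q.2.1))
          = Prod.fst ∘ Prod.fst := rfl
      rw [he, ← Measure.map_map measurable_fst measurable_fst, hΘfst, hπ.1]
    · rw [hγ₂def, Measure.map_map measurable_snd hmap2]
      have he : (Prod.snd ∘ fun q : (Em m × Em m) × (Em m × Em m) => (q.1.1, q.2.1))
          = Prod.fst ∘ Prod.snd := rfl
      rw [he, ← Measure.map_map measurable_fst measurable_snd, hΘsnd, hγ.1]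
  have hγ₃c : IsCoupling γ₃ μ μ₃ := by
    constructor
    · rw [hγ₃def, Measure.map_map measurable_fst hmap3]
      have he : (Prod.fst ∘ fun q : (Em m × Em m) × (Em m × Em m) => (q.1.1, q.2.2))
          = Prod.fst ∘ Prod.fst := rfl
      rw [he, ← Measure.map_map measurable_fst measurable_fst, hΘfst, hπ.1]
    · rw [hγ₃def, Measure.map_map measurable_snd hmap3]
      have he : (Prod.snd ∘ fun q : (Em m × Em m) × (Em m × Em m) => (q.1.1, q.2.2))
          = Prod.snd ∘ Prod.snd := rfl
      rw [he, ← Measure.map_map measurable_snd measurable_snd, hΘsnd, hγ.2]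
  -- change of variables for the integrals
  have ht2 : ∫ p, c p.1 p.2 ∂γ₂ = ∫ q, c q.1.1 q.2.1 ∂Θ := by
    rw [hγ₂def]
    exact integral_map hmap2.aemeasurable hcont.aestronglyMeasurable
  have ht3 : ∫ p, c p.1 p.2 ∂γ₃ = ∫ q, c q.1.1 q.2.2 ∂Θ := by
    rw [hγ₃def]
    exact integral_map hmap3.aemeasurable hcont.aestronglyMeasurable
  have htf : ∫ p, c p.1 p.2 ∂π = ∫ q, c q.1.1 q.1.2 ∂Θ := by
    rw [← hΘfst]
    exact integral_map measurable_fst.aemeasurable hcont.aestronglyMeasurable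
  have htg : (∫ p : Em m × Em m, ‖p.1 - p.2‖ ^ 2 ∂γ) = ∫ q, ‖q.2.1 - q.2.2‖ ^ 2 ∂Θ := by
    rw [← hΘsnd]
    exact integral_map measurable_snd.aemeasurable
      ((continuous_fst.sub continuous_snd).norm.pow 2).aestronglyMeasurable
  rw [← ht2, ← ht3, ← htf, ← htg] at key
  -- Ccost bounds
  have hC2 : Ccost c μ μ₂ ≤ ∫ p, c p.1 p.2 ∂γ₂ := csInf_le (hbdd μ₂ hμ₂c) ⟨γ₂, hγ₂c, rfl⟩
  have hC3 : Ccost c μ μ₃ ≤ ∫ p, c p.1 p.2 ∂γ₃ := csInf_le (hbdd μ₃ hμ₃c) ⟨γ₃, hγ₃c, rfl⟩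
  have h2' : (1 - lam) * Ccost c μ μ₂ ≤ (1 - lam) * ∫ p, c p.1 p.2 ∂γ₂ :=
    mul_le_mul_of_nonneg_left hC2 (by linarith)
  have h3' : lam * Ccost c μ μ₃ ≤ lam * ∫ p, c p.1 p.2 ∂γ₃ :=
    mul_le_mul_of_nonneg_left hC3 hlam0
  linarith
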